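/- arXiv:2601.22855 — 7 statements merged into one kernel-verified Lean document; each statement's English description precedes it below -/
import Mathlib

section
/- Let (Ω,𝓕,ℙ) be a probability space with a filtration (𝓕_n)_{n≥0}, and let (X_n)_{n≥0} be an integer-valued process adapted to (𝓕_n)_{n≥0} such that almost surely X_0 = 1 and X_{n+1} ∈ {X_n, X_n + 1} for all n ≥ 0. Write X̂_n = X_n/(n+1). Suppose there is a function G : [0,1] → [0,1] such that for all n ≥ 0, ℙ(X_{n+1} = X_n + 1 | 𝓕_n) ≥ G(X̂_n) almost surely. If there exist c > 0 and ε > 0 such that G(x) > (1+ε)·x for all x ∈ (0,c), then almost surely liminf_{n→∞} X̂_n ≥ c. -/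
/-!
Write `ξₙ = Xₙ / (n + 1)`, `χₖ = 𝟙{Xₖ₊₁ = Xₖ + 1}` and `pₖ = ℙ(Xₖ₊₁ = Xₖ + 1 | 𝓕ₖ)`.
The compensated sum `Mₙ = ∑_{k<n} (χₖ - pₖ) / Xₖ` is a martingale with orthogonal increments whose
second moments add up to at most `2 𝔼 ∑ₖ χₖ / Xₖ² ≤ 4`, so it converges almost surely.

Fix such a path. Since `log x - 1/x` increases by at least `1/x` when `x` steps to `x + 1`, and
`pₖ / Xₖ ≥ (1 + ε) / (k + 1)` whenever `ξₖ < c`, the potential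
`log Xₙ - 1/Xₙ - (1 + ε) log (n + 1) - Mₙ` does not decrease while `ξ` stays below `c`.
It is at most `-ε log (n + 1) - Mₙ → -∞`, so `ξ` returns above `c` infinitely often; and from a
late time `σ` with `ξ_σ ≥ c`, monotonicity of the potential up to the next return bounds `log ξ`
below by `log c - O(1/σ) - (oscillation of M after σ)`. Hence no level `b < c` is visited
infinitely often.
-/

open MeasureTheory Filter Topology Finset

structure IsUnitStepPath (x χ : ℕ → ℝ) : Prop where
  zero : x 0 = 1
  succ : ∀ k, x (k + 1) = x k + χ k
  step : ∀ k, χ k = 0 ∨ χ k = 1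

theorem Nat.exists_last_of_lt {P : ℕ → Prop} {a t : ℕ} (ha : P a) (hat : a < t) :
    ∃ s, a ≤ s ∧ s < t ∧ P s ∧ ∀ k, s < k → k < t → ¬P k := by
  classical
  have hle := Nat.findGreatest_le (P := P) (t - 1)
  exact ⟨Nat.findGreatest P (t - 1), Nat.le_findGreatest (by omega) ha, by omega,
    Nat.findGreatest_spec (by omega) ha, fun k hk hkt => Nat.findGreatest_is_greatest hk (by omega)⟩

theorem Real.log_add_one_sub_log_le {a : ℝ} (ha : 0 < a) : Real.log (a + 1) - Real.log a ≤ a⁻¹ := by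
  have h := Real.log_le_sub_one_of_pos (x := (a + 1) / a) (by positivity)
  rw [Real.log_div (by positivity) ha.ne'] at h
  rwa [add_div, div_self ha.ne', add_sub_cancel_left, one_div] at h

theorem div_le_log_sub_inv_sub {a χ : ℝ} (ha : 0 < a) (hχ : χ = 0 ∨ χ = 1) :
    χ / a ≤ (Real.log (a + χ) - (a + χ)⁻¹) - (Real.log a - a⁻¹) := by
  rcases hχ with rfl | rfl
  · simp
  · have h := Real.one_sub_inv_le_log_of_pos (x := (a + 1) / a) (by positivity)
    rw [Real.log_div (by positivity) ha.ne', inv_div, one_sub_div (by positivity),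
      add_sub_cancel_left, one_div] at h
    rw [one_div]
    linarith

theorem div_sq_le_two_div_sub {a χ : ℝ} (ha : 1 ≤ a) (hχ : χ = 0 ∨ χ = 1) :
    χ / a ^ 2 ≤ 2 / a - 2 / (a + χ) := by
  rcases hχ with rfl | rfl
  · simp
  · rw [div_sub_div _ _ (by positivity) (by positivity), div_le_div_iff₀ (by positivity)
      (by positivity)]
    nlinarith

theorem Real.log_natCast_add_two_sub_log_le (k : ℕ) :
    Real.log ((k : ℝ) + 2) - Real.log (k + 1) ≤ ((k : ℝ) + 1)⁻¹ := by
  have := Real.log_add_one_sub_log_le k.cast_add_one_pos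
  rwa [add_assoc, one_add_one_eq_two] at this

noncomputable def compensatedSum (x χ q : ℕ → ℝ) (n : ℕ) : ℝ :=
  ∑ k ∈ range n, (χ k - q k) / x k

noncomputable def potential (x χ q : ℕ → ℝ) (r : ℝ) (n : ℕ) : ℝ :=
  Real.log (x n) - (x n)⁻¹ - r * Real.log (n + 1) - compensatedSum x χ q n

namespace IsUnitStepPath

variable {x χ q : ℕ → ℝ} {r c : ℝ} {k : ℕ}

theorem le_succ (h : IsUnitStepPath x χ) (k : ℕ) : x k ≤ x (k + 1) := by
  rcases h.step k with hk | hk <;> linarith [h.succ k]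

theorem one_le (h : IsUnitStepPath x χ) (k : ℕ) : 1 ≤ x k :=
  h.zero ▸ monotone_nat_of_le_succ h.le_succ (Nat.zero_le k)

theorem pos (h : IsUnitStepPath x χ) (k : ℕ) : 0 < x k :=
  one_pos.trans_le (h.one_le k)

theorem le_add_one (h : IsUnitStepPath x χ) (k : ℕ) : x k ≤ k + 1 := by
  induction k with
  | zero => simp [h.zero]
  | succ k ih => rcases h.step k with hk | hk <;> push_cast <;> linarith [h.succ k]

theorem div_pos (h : IsUnitStepPath x χ) (k : ℕ) : 0 < x k / (k + 1) :=
  _root_.div_pos (h.pos k) k.cast_add_one_pos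

theorem div_le_one (h : IsUnitStepPath x χ) (k : ℕ) : x k / (k + 1) ≤ 1 :=
  (_root_.div_le_one k.cast_add_one_pos).2 (h.le_add_one k)

theorem sum_div_sq_le_two (h : IsUnitStepPath x χ) (n : ℕ) :
    ∑ k ∈ range n, χ k / x k ^ 2 ≤ 2 := by
  calc ∑ k ∈ range n, χ k / x k ^ 2
      ≤ ∑ k ∈ range n, (2 / x k - 2 / x (k + 1)) := sum_le_sum fun k _ => by
        rw [h.succ k]; exact div_sq_le_two_div_sub (h.one_le k) (h.step k)
    _ = 2 - 2 / x n := by rw [sum_range_sub', h.zero, div_one]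
    _ ≤ 2 := by linarith [_root_.div_pos two_pos (h.pos n)]

theorem potential_add_le_succ (h : IsUnitStepPath x χ) (k : ℕ) :
    potential x χ q r k + q k / x k - r * (Real.log (k + 2) - Real.log (k + 1))
      ≤ potential x χ q r (k + 1) := by
  have hstep := div_le_log_sub_inv_sub (h.pos k) (h.step k)
  rw [← h.succ k] at hstep
  have hcast : ((k + 1 : ℕ) : ℝ) + 1 = k + 2 := by push_cast; ring
  simp only [potential, compensatedSum, sum_range_succ, hcast, sub_div]
  linarith

theorem potential_sub_le_succ (h : IsUnitStepPath x χ) (hr : 0 ≤ r) (hq : 0 ≤ q k) :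
    potential x χ q r k - r / (k + 1) ≤ potential x χ q r (k + 1) := by
  have hlog := mul_le_mul_of_nonneg_left (Real.log_natCast_add_two_sub_log_le k) hr
  have := _root_.div_nonneg hq (h.pos k).le
  linarith [h.potential_add_le_succ (q := q) (r := r) k, div_eq_mul_inv r ((k : ℝ) + 1)]

theorem potential_le_succ (h : IsUnitStepPath x χ) (hr : 0 ≤ r)
    (hdrift : r * (x k / (k + 1)) ≤ q k) :
    potential x χ q r k ≤ potential x χ q r (k + 1) := by
  have hlog := mul_le_mul_of_nonneg_left (Real.log_natCast_add_two_sub_log_le k) hr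
  have hq : r * ((k : ℝ) + 1)⁻¹ ≤ q k / x k := by
    rw [le_div_iff₀ (h.pos k)]
    calc r * ((k : ℝ) + 1)⁻¹ * x k = r * (x k / (k + 1)) := by ring
      _ ≤ q k := hdrift
  linarith [h.potential_add_le_succ (q := q) (r := r) k]

theorem potential_mono (h : IsUnitStepPath x χ) (hr : 0 ≤ r) {s t : ℕ} (hst : s ≤ t)
    (hdrift : ∀ k, s ≤ k → k < t → r * (x k / (k + 1)) ≤ q k) :
    potential x χ q r s ≤ potential x χ q r t := by
  induction t, hst using Nat.le_induction with
  | base => exact le_rfl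
  | succ t hst ih =>
    exact (ih fun k hsk hkt => hdrift k hsk (by omega)).trans
      (h.potential_le_succ hr (hdrift t hst (lt_add_one t)))

theorem potential_le (h : IsUnitStepPath x χ) (n : ℕ) :
    potential x χ q r n ≤ (1 - r) * Real.log (n + 1) - compensatedSum x χ q n := by
  have hlog := Real.log_le_log (h.pos n) (h.le_add_one n)
  have := inv_nonneg.2 (h.pos n).le
  simp only [potential]
  linarith

theorem frequently_le_div (h : IsUnitStepPath x χ) (hr : 1 < r)
    (hdrift : ∀ k, x k / (k + 1) < c → r * (x k / (k + 1)) ≤ q k) {l : ℝ}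
    (hM : Tendsto (compensatedSum x χ q) atTop (𝓝 l)) :
    ∃ᶠ n in atTop, c ≤ x n / (n + 1) := by
  by_contra hfreq
  obtain ⟨s, hs⟩ := eventually_atTop.1 (not_frequently.1 hfreq)
  have hbound : Tendsto (fun n : ℕ => (1 - r) * Real.log (n + 1) - compensatedSum x χ q n)
      atTop atBot :=
    ((Real.tendsto_log_atTop.comp (tendsto_natCast_atTop_atTop.atTop_add tendsto_const_nhds)
      ).const_mul_atTop_of_neg (by linarith)).atBot_add hM.neg
  obtain ⟨n, hsn, hn⟩ :=
    ((eventually_ge_atTop s).and (hbound.eventually_lt_atBot (potential x χ q r s))).exists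
  have hmono := h.potential_mono (by linarith) hsn fun k hsk _ => hdrift k (not_le.1 (hs k hsk))
  linarith [h.potential_le (q := q) (r := r) n]

theorem log_div_ge_of_excursion (h : IsUnitStepPath x χ) (hr : 1 ≤ r) (hc : 0 < c)
    (hq : ∀ k, 0 ≤ q k) (hdrift : ∀ k, x k / (k + 1) < c → r * (x k / (k + 1)) ≤ q k)
    {σ τ : ℕ} (hστ : σ < τ) (hσ : c ≤ x σ / (σ + 1))
    (hbelow : ∀ k, σ < k → k < τ → x k / (k + 1) < c) :
    Real.log c - (c⁻¹ + r) / (σ + 1) + (compensatedSum x χ q τ - compensatedSum x χ q σ)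
      ≤ Real.log (x τ / (τ + 1)) := by
  have hjump := h.potential_sub_le_succ (r := r) (k := σ) (by linarith) (hq σ)
  have hmono := h.potential_mono (q := q) (r := r) (s := σ + 1) (by linarith) hστ
    fun k hσk hkτ => hdrift k (hbelow k hσk hkτ)
  have hσ' : c * (σ + 1) ≤ x σ := (le_div_iff₀ σ.cast_add_one_pos).1 hσ
  have hlogσ : Real.log c + Real.log (σ + 1) ≤ Real.log (x σ) := by
    rw [← Real.log_mul hc.ne' σ.cast_add_one_pos.ne']
    exact Real.log_le_log (by positivity) hσ'
  have hinvσ : (x σ)⁻¹ ≤ c⁻¹ / (σ + 1) := by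
    rw [div_eq_mul_inv, ← mul_inv]
    exact inv_anti₀ (by positivity) hσ'
  have hlogτ : Real.log (x τ) = Real.log (x τ / (τ + 1)) + Real.log (τ + 1) := by
    rw [Real.log_div (h.pos τ).ne' τ.cast_add_one_pos.ne', sub_add_cancel]
  have hστ' : Real.log ((σ : ℝ) + 1) ≤ Real.log (τ + 1) :=
    Real.log_le_log σ.cast_add_one_pos (by exact_mod_cast Nat.succ_le_succ hστ.le)
  have := inv_nonneg.2 (h.pos τ).le
  have := mul_le_mul_of_nonneg_left hστ' (sub_nonneg.2 hr)
  simp only [potential, Nat.cast_add_one] at hjump hmono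
  rw [div_eq_mul_inv (c⁻¹ + r), add_mul, ← div_eq_mul_inv, ← div_eq_mul_inv]
  linarith

theorem le_liminf_div (h : IsUnitStepPath x χ) (hr : 1 < r) (hq : ∀ k, 0 ≤ q k)
    (hdrift : ∀ k, x k / (k + 1) < c → r * (x k / (k + 1)) ≤ q k) {l : ℝ}
    (hM : Tendsto (compensatedSum x χ q) atTop (𝓝 l)) :
    c ≤ liminf (fun n => x n / (n + 1)) atTop := by
  have hcob : IsCoboundedUnder (· ≥ ·) atTop fun n => x n / (n + 1) :=
    isCoboundedUnder_ge_of_le _ h.div_le_one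
  by_contra! hlt
  obtain ⟨b, hb, hbc⟩ := exists_between hlt
  have hb0 : 0 < b :=
    (le_liminf_of_le hcob (Eventually.of_forall fun n => (h.div_pos n).le)).trans_lt hb
  have hc : 0 < c := hb0.trans hbc
  set δ := Real.log c - Real.log b
  have hδ : 0 < δ := sub_pos.2 (Real.log_lt_log hb0 hbc)
  obtain ⟨S, hS⟩ := Metric.cauchySeq_iff.1 hM.cauchySeq (δ / 2) (half_pos hδ)
  have herr : Tendsto (fun σ : ℕ => (c⁻¹ + r) / (σ + 1)) atTop (𝓝 0) :=
    tendsto_const_nhds.div_atTop (tendsto_natCast_atTop_atTop.atTop_add tendsto_const_nhds)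
  obtain ⟨K, hK⟩ := eventually_atTop.1 (herr.eventually (gt_mem_nhds (half_pos hδ)))
  obtain ⟨σ₀, hσ₀, hσ₀c⟩ := frequently_atTop.1 (h.frequently_le_div hr hdrift hM) (max S K)
  obtain ⟨τ, hτ, hτb⟩ := frequently_atTop.1 (frequently_lt_of_liminf_lt hcob hb) (σ₀ + 1)
  obtain ⟨σ, hσ₀σ, hστ, hσc, hlast⟩ :=
    Nat.exists_last_of_lt (P := fun n => c ≤ x n / (n + 1)) hσ₀c (by omega : σ₀ < τ)
  have hexc := h.log_div_ge_of_excursion hr.le hc hq hdrift hστ hσc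
    fun k hσk hkτ => not_le.1 (hlast k hσk hkτ)
  have hdist := hS τ (by omega) σ (by omega)
  rw [Real.dist_eq, abs_lt] at hdist
  linarith [Real.log_lt_log (h.div_pos τ) hτb, hK σ (by omega)]

end IsUnitStepPath

section Martingale

variable {Ω : Type*} {m m0 : MeasurableSpace Ω} {μ : Measure Ω} [IsFiniteMeasure μ]

theorem eLpNorm_one_le_measureReal_add_integral_sq {f : Ω → ℝ} (hf : MemLp f 2 μ) :
    eLpNorm f 1 μ ≤ ENNReal.ofReal (μ.real Set.univ + ∫ ω, f ω ^ 2 ∂μ) := by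
  have hint := hf.integrable one_le_two
  rw [eLpNorm_one_eq_lintegral_enorm, ← ofReal_integral_norm_eq_lintegral_enorm hint]
  refine ENNReal.ofReal_le_ofReal ?_
  calc ∫ ω, ‖f ω‖ ∂μ ≤ ∫ ω, (1 + f ω ^ 2) ∂μ :=
        integral_mono hint.norm ((integrable_const 1).add hf.integrable_sq) fun ω => by
          nlinarith [sq_abs (f ω), Real.norm_eq_abs (f ω), sq_nonneg (|f ω| - 1)]
    _ = μ.real Set.univ + ∫ ω, f ω ^ 2 ∂μ := by
        rw [integral_add (integrable_const 1) hf.integrable_sq, integral_const, smul_eq_mul,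
          mul_one]

theorem integral_mul_condExp (hm : m ≤ m0) {f g : Ω → ℝ}
    (hf : StronglyMeasurable[m] f) (hfg : Integrable (f * g) μ) (hg : Integrable g μ) :
    ∫ ω, f ω * μ[g | m] ω ∂μ = ∫ ω, f ω * g ω ∂μ :=
  calc ∫ ω, f ω * μ[g | m] ω ∂μ = ∫ ω, μ[f * g | m] ω ∂μ :=
        integral_congr_ae (condExp_mul_of_stronglyMeasurable_left hf hfg hg).symm
    _ = ∫ ω, f ω * g ω ∂μ := integral_condExp hm

variable {𝓕 : Filtration ℕ m0} {d : ℕ → Ω → ℝ}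

theorem stronglyMeasurable_sum_range (hd_meas : ∀ k, StronglyMeasurable[𝓕 (k + 1)] (d k))
    (n : ℕ) : StronglyMeasurable[𝓕 n] fun ω => ∑ k ∈ range n, d k ω :=
  Finset.stronglyMeasurable_fun_sum _ fun k hk =>
    (hd_meas k).mono (𝓕.mono (Nat.succ_le_of_lt (mem_range.1 hk)))

theorem integral_sq_sum_range_eq_sum_integral_sq
    (hd_meas : ∀ k, StronglyMeasurable[𝓕 (k + 1)] (d k)) (hd : ∀ k, MemLp (d k) 2 μ)
    (hd_cond : ∀ k, μ[d k | 𝓕 k] =ᵐ[μ] 0) (n : ℕ) :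
    ∫ ω, (∑ k ∈ range n, d k ω) ^ 2 ∂μ = ∑ k ∈ range n, ∫ ω, d k ω ^ 2 ∂μ := by
  induction n with
  | zero => simp
  | succ n ih =>
    have hS : MemLp (fun ω => ∑ k ∈ range n, d k ω) 2 μ := memLp_finsetSum _ fun k _ => hd k
    have hSd : Integrable ((fun ω => ∑ k ∈ range n, d k ω) * d n) μ := hS.integrable_mul (hd n)
    have horth : ∫ ω, (∑ k ∈ range n, d k ω) * d n ω ∂μ = 0 := by
      rw [← integral_mul_condExp (𝓕.le n) (stronglyMeasurable_sum_range hd_meas n) hSd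
        ((hd n).integrable one_le_two)]
      refine (integral_congr_ae ?_).trans (integral_zero Ω ℝ)
      filter_upwards [hd_cond n] with ω hω
      simp [hω]
    have hsq : Integrable (fun ω => (∑ k ∈ range n, d k ω) ^ 2) μ := hS.integrable_sq
    have hcross : Integrable (fun ω => 2 * ((∑ k ∈ range n, d k ω) * d n ω)) μ :=
      hSd.const_mul 2
    have hsum : Integrable (fun ω => (∑ k ∈ range n, d k ω) ^ 2
        + 2 * ((∑ k ∈ range n, d k ω) * d n ω)) μ := hsq.add hcross
    calc ∫ ω, (∑ k ∈ range (n + 1), d k ω) ^ 2 ∂μ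
        = ∫ ω, ((∑ k ∈ range n, d k ω) ^ 2 + 2 * ((∑ k ∈ range n, d k ω) * d n ω)
            + d n ω ^ 2) ∂μ := by
          simp only [sum_range_succ]; congr 1; ext ω; ring
      _ = ∑ k ∈ range (n + 1), ∫ ω, d k ω ^ 2 ∂μ := by
          rw [integral_add hsum (hd n).integrable_sq, integral_add hsq hcross,
            integral_const_mul, horth, ih, sum_range_succ, mul_zero, add_zero]

theorem ae_exists_tendsto_sum_of_condExp_eq_zero
    (hd_meas : ∀ k, StronglyMeasurable[𝓕 (k + 1)] (d k)) (hd : ∀ k, MemLp (d k) 2 μ)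
    (hd_cond : ∀ k, μ[d k | 𝓕 k] =ᵐ[μ] 0) {C : ℝ}
    (hC : ∀ n, ∑ k ∈ range n, ∫ ω, d k ω ^ 2 ∂μ ≤ C) :
    ∀ᵐ ω ∂μ, ∃ l, Tendsto (fun n => ∑ k ∈ range n, d k ω) atTop (𝓝 l) := by
  have hS : ∀ n, MemLp (fun ω => ∑ k ∈ range n, d k ω) 2 μ := fun n =>
    memLp_finsetSum _ fun k _ => hd k
  have hmart : Martingale (fun n ω => ∑ k ∈ range n, d k ω) 𝓕 μ := by
    refine martingale_nat (stronglyMeasurable_sum_range hd_meas)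
      (fun n => (hS n).integrable one_le_two) fun n => ?_
    have hsucc : (fun ω => ∑ k ∈ range (n + 1), d k ω) = (fun ω => ∑ k ∈ range n, d k ω) + d n :=
      funext fun ω => sum_range_succ _ _
    rw [hsucc]
    filter_upwards [condExp_add ((hS n).integrable one_le_two) ((hd n).integrable one_le_two) (𝓕 n),
      hd_cond n] with ω hadd hzero
    rw [hadd, Pi.add_apply, hzero, condExp_of_stronglyMeasurable (𝓕.le n)
      (stronglyMeasurable_sum_range hd_meas n) ((hS n).integrable one_le_two)]
    simp
  refine hmart.submartingale.exists_ae_tendsto_of_bdd (R := (μ.real Set.univ + C).toNNReal)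
    fun n => (eLpNorm_one_le_measureReal_add_integral_sq (hS n)).trans
      (ENNReal.ofReal_le_ofReal ?_)
  rw [integral_sq_sum_range_eq_sum_integral_sq hd_meas hd hd_cond]
  linarith [hC n]

theorem sq_sub_mul_le_add_mul {i p v : ℝ} (hi : i = 0 ∨ i = 1) (hp : p ∈ Set.Icc (0 : ℝ) 1) :
    ((i - p) * v) ^ 2 ≤ (i + p) * v ^ 2 := by
  have hip : (i - p) ^ 2 ≤ i + p := by
    obtain ⟨hp0, hp1⟩ := hp
    rcases hi with rfl | rfl <;> nlinarith
  rw [mul_pow]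
  exact mul_le_mul_of_nonneg_right hip (sq_nonneg v)

section CompensatedIndicator

variable {A : Set Ω} {V : Ω → ℝ}

theorem condExp_indicator_mem_Icc (hm : m ≤ m0) (hA : MeasurableSet A) :
    ∀ᵐ ω ∂μ, μ[A.indicator (fun _ => (1 : ℝ)) | m] ω ∈ Set.Icc (0 : ℝ) 1 := by
  have hnonneg := condExp_nonneg (μ := μ) (m := m)
    (ae_of_all μ (Set.indicator_nonneg fun _ _ => zero_le_one : 0 ≤ A.indicator fun _ => (1 : ℝ)))
  have hle := condExp_mono (m := m) ((integrable_const (1 : ℝ)).indicator hA)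
    (integrable_const (1 : ℝ))
    (ae_of_all μ fun ω => Set.indicator_le_self' (s := A) (f := fun _ => (1 : ℝ))
      (fun _ _ => zero_le_one) ω)
  rw [condExp_const hm] at hle
  filter_upwards [hnonneg, hle] with ω h0 h1 using ⟨h0, h1⟩

theorem memLp_indicator_sub_condExp_mul (hm : m ≤ m0) (hA : MeasurableSet A)
    (hV : StronglyMeasurable[m] V) (hV_bdd : ∀ ω, |V ω| ≤ 1) :
    MemLp (fun ω => (A.indicator (fun _ => (1 : ℝ)) ω - μ[A.indicator (fun _ => 1) | m] ω)
      * V ω) 2 μ := by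
  have hmeas : StronglyMeasurable[m0] fun ω =>
      (A.indicator (fun _ => (1 : ℝ)) ω - μ[A.indicator (fun _ => 1) | m] ω) * V ω :=
    ((stronglyMeasurable_const.indicator hA).sub (stronglyMeasurable_condExp.mono hm)).mul
      (hV.mono hm)
  refine MemLp.of_bound hmeas.aestronglyMeasurable 1 ?_
  filter_upwards [condExp_indicator_mem_Icc hm hA] with ω ⟨hp0, hp1⟩
  rw [Real.norm_eq_abs, abs_mul]
  refine mul_le_one₀ ?_ (abs_nonneg _) (hV_bdd ω)
  rcases Set.indicator_eq_zero_or_self A (fun _ => (1 : ℝ)) ω with h | h <;>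
    rw [h, abs_le] <;> constructor <;> linarith

theorem integrable_indicator_mul_sq (hm : m ≤ m0) (hA : MeasurableSet A)
    (hV : StronglyMeasurable[m] V) (hV_bdd : ∀ ω, |V ω| ≤ 1) :
    Integrable (fun ω => A.indicator (fun _ => (1 : ℝ)) ω * V ω ^ 2) μ :=
  ((integrable_const 1).indicator hA).mul_bdd ((hV.pow 2).mono hm).aestronglyMeasurable
    (ae_of_all μ fun ω => by
      rw [Real.norm_of_nonneg (sq_nonneg _)]
      exact (sq_le_one_iff_abs_le_one _).2 (hV_bdd ω))

theorem condExp_indicator_sub_condExp_mul_eq_zero (hm : m ≤ m0) (hA : MeasurableSet A)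
    (hV : StronglyMeasurable[m] V) (hV_bdd : ∀ ω, |V ω| ≤ 1) :
    μ[fun ω => (A.indicator (fun _ => (1 : ℝ)) ω - μ[A.indicator (fun _ => 1) | m] ω) * V ω
      | m] =ᵐ[μ] 0 := by
  set I := A.indicator fun _ => (1 : ℝ)
  have hI : Integrable I μ := (integrable_const 1).indicator hA
  have hIp : Integrable (I - μ[I | m]) μ := hI.sub integrable_condExp
  have hprod : Integrable (V * (I - μ[I | m])) μ :=
    hIp.bdd_mul (hV.mono hm).aestronglyMeasurable
      (ae_of_all μ fun ω => (Real.norm_eq_abs _).trans_le (hV_bdd ω))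
  have hcomm : (fun ω => (I ω - μ[I | m] ω) * V ω) = V * (I - μ[I | m]) :=
    funext fun ω => mul_comm _ _
  rw [hcomm]
  filter_upwards [condExp_mul_of_stronglyMeasurable_left hV hprod hIp,
    condExp_sub hI integrable_condExp m] with ω hpull hsub
  rw [hpull, Pi.mul_apply, hsub, Pi.sub_apply,
    condExp_of_stronglyMeasurable hm stronglyMeasurable_condExp integrable_condExp]
  simp

theorem integral_sq_indicator_sub_condExp_mul_le (hm : m ≤ m0) (hA : MeasurableSet A)
    (hV : StronglyMeasurable[m] V) (hV_bdd : ∀ ω, |V ω| ≤ 1) :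
    ∫ ω, ((A.indicator (fun _ => (1 : ℝ)) ω - μ[A.indicator (fun _ => 1) | m] ω) * V ω) ^ 2 ∂μ
      ≤ 2 * ∫ ω, A.indicator (fun _ => (1 : ℝ)) ω * V ω ^ 2 ∂μ := by
  set I := A.indicator fun _ => (1 : ℝ)
  have hI : Integrable I μ := (integrable_const 1).indicator hA
  have hV2 : StronglyMeasurable[m] fun ω => V ω ^ 2 := hV.pow 2
  have hV2_bdd : ∀ᵐ ω ∂μ, ‖V ω ^ 2‖ ≤ 1 := ae_of_all μ fun ω => by
    rw [Real.norm_of_nonneg (sq_nonneg _)]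
    exact (sq_le_one_iff_abs_le_one _).2 (hV_bdd ω)
  have hIV : Integrable (fun ω => V ω ^ 2 * I ω) μ :=
    hI.bdd_mul (hV2.mono hm).aestronglyMeasurable hV2_bdd
  have hpV : Integrable (fun ω => V ω ^ 2 * μ[I | m] ω) μ :=
    integrable_condExp.bdd_mul (hV2.mono hm).aestronglyMeasurable hV2_bdd
  calc ∫ ω, ((I ω - μ[I | m] ω) * V ω) ^ 2 ∂μ
      ≤ ∫ ω, (V ω ^ 2 * I ω + V ω ^ 2 * μ[I | m] ω) ∂μ := by
        refine integral_mono_ae (memLp_indicator_sub_condExp_mul hm hA hV hV_bdd).integrable_sq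
          (hIV.add hpV) ?_
        filter_upwards [condExp_indicator_mem_Icc hm hA] with ω hp
        linarith [sq_sub_mul_le_add_mul (v := V ω)
          (Set.indicator_eq_zero_or_self A (fun _ => (1 : ℝ)) ω) hp]
    _ = 2 * ∫ ω, I ω * V ω ^ 2 ∂μ := by
        rw [integral_add hIV hpV, integral_mul_condExp hm hV2 hIV hI, ← two_mul]
        simp_rw [mul_comm (V _ ^ 2)]

end CompensatedIndicator

theorem ae_exists_tendsto_sum_indicator_sub_condExp_mul {A : ℕ → Set Ω} {V : ℕ → Ω → ℝ}
    (hA : ∀ k, MeasurableSet[𝓕 (k + 1)] (A k)) (hV : ∀ k, StronglyMeasurable[𝓕 k] (V k))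
    (hV_bdd : ∀ k ω, |V k ω| ≤ 1) {C : ℝ}
    (hC : ∀ n, ∀ᵐ ω ∂μ, ∑ k ∈ range n, (A k).indicator (fun _ => (1 : ℝ)) ω * V k ω ^ 2 ≤ C) :
    ∀ᵐ ω ∂μ, ∃ l, Tendsto (fun n => ∑ k ∈ range n,
      ((A k).indicator (fun _ => (1 : ℝ)) ω - μ[(A k).indicator (fun _ => 1) | 𝓕 k] ω) * V k ω)
      atTop (𝓝 l) := by
  have hA0 : ∀ k, MeasurableSet (A k) := fun k => 𝓕.le (k + 1) _ (hA k)
  have hint := fun k => integrable_indicator_mul_sq (μ := μ) (𝓕.le k) (hA0 k) (hV k) (hV_bdd k)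
  refine ae_exists_tendsto_sum_of_condExp_eq_zero (C := 2 * (μ.real Set.univ * C))
    (fun k => ((stronglyMeasurable_const.indicator (hA k)).sub
      (stronglyMeasurable_condExp.mono (𝓕.mono k.le_succ))).mul ((hV k).mono (𝓕.mono k.le_succ)))
    (fun k => memLp_indicator_sub_condExp_mul (𝓕.le k) (hA0 k) (hV k) (hV_bdd k))
    (fun k => condExp_indicator_sub_condExp_mul_eq_zero (𝓕.le k) (hA0 k) (hV k) (hV_bdd k))
    fun n => ?_
  calc _ ≤ ∑ k ∈ range n, 2 * ∫ ω, (A k).indicator (fun _ => (1 : ℝ)) ω * V k ω ^ 2 ∂μ :=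
        sum_le_sum fun k _ =>
          integral_sq_indicator_sub_condExp_mul_le (𝓕.le k) (hA0 k) (hV k) (hV_bdd k)
    _ = 2 * ∫ ω, ∑ k ∈ range n, (A k).indicator (fun _ => (1 : ℝ)) ω * V k ω ^ 2 ∂μ := by
        rw [← mul_sum, integral_finsetSum _ fun k _ => hint k]
    _ ≤ 2 * (μ.real Set.univ * C) := by
        grw [integral_mono_ae (integrable_finsetSum _ fun k _ => hint k) (integrable_const C)
          (hC n), integral_const, smul_eq_mul]

end Martingale

theorem isUnitStepPath_indicator {Ω : Type*} {X : ℕ → Ω → ℕ} {ω : Ω} (h0 : X 0 ω = 1)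
    (hs : ∀ k, X (k + 1) ω = X k ω ∨ X (k + 1) ω = X k ω + 1) :
    IsUnitStepPath (fun k => (X k ω : ℝ))
      fun k => {ω' | X (k + 1) ω' = X k ω' + 1}.indicator (fun _ => 1) ω where
  zero := by simp [h0]
  succ k := by rcases hs k with h | h <;> simp [h]
  step k := Set.indicator_eq_zero_or_self _ _ _

theorem statement1_general
    {Ω : Type*} [m0 : MeasurableSpace Ω] (ℙ : Measure Ω) [IsProbabilityMeasure ℙ]
    (𝓕 : Filtration ℕ m0)
    (X : ℕ → Ω → ℕ)
    (hadapted : ∀ n, Measurable[𝓕 n] (X n))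
    (hX0 : ∀ᵐ ω ∂ℙ, X 0 ω = 1)
    (hstep : ∀ n, ∀ᵐ ω ∂ℙ, X (n+1) ω = X n ω ∨ X (n+1) ω = X n ω + 1)
    (G : ℝ → ℝ)
    (hcond : ∀ n, ∀ᵐ ω ∂ℙ,
      G ((X n ω : ℝ) / (n+1)) ≤
        (ℙ[Set.indicator {ω' | X (n+1) ω' = X n ω' + 1} (fun _ => (1:ℝ)) | 𝓕 n]) ω)
    (c ε : ℝ) (hε : 0 < ε)
    (hdomin : ∀ x ∈ Set.Ioo (0:ℝ) c, (1 + ε) * x < G x) :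
    ∀ᵐ ω ∂ℙ, c ≤ liminf (fun n => (X n ω : ℝ) / (n+1)) atTop := by
  have hA : ∀ k, MeasurableSet[𝓕 (k + 1)] {ω | X (k + 1) ω = X k ω + 1} := fun k =>
    measurableSet_eq_fun (hadapted (k + 1))
      (((hadapted k).mono (𝓕.mono k.le_succ) le_rfl).add measurable_const)
  have hV : ∀ k, StronglyMeasurable[𝓕 k] fun ω => ((X k ω : ℝ))⁻¹ := fun k =>
    ((measurable_from_top (f := fun n : ℕ => (n : ℝ)⁻¹)).comp (hadapted k)).stronglyMeasurable
  have hV_bdd : ∀ k ω, |((X k ω : ℝ))⁻¹| ≤ 1 := fun k ω => by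
    rw [abs_of_nonneg (by positivity)]
    exact Nat.cast_inv_le_one _
  have hpath : ∀ᵐ ω ∂ℙ, IsUnitStepPath (fun k => (X k ω : ℝ))
      fun k => {ω' | X (k + 1) ω' = X k ω' + 1}.indicator (fun _ => 1) ω := by
    filter_upwards [hX0, ae_all_iff.2 hstep] with ω h0 hs using isUnitStepPath_indicator h0 hs
  have hM := ae_exists_tendsto_sum_indicator_sub_condExp_mul hA hV hV_bdd (C := 2) fun n => by
    filter_upwards [hpath] with ω hω
    simpa only [inv_pow, div_eq_mul_inv] using hω.sum_div_sq_le_two n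
  have hp : ∀ k, 0 ≤ᵐ[ℙ] ℙ[{ω' | X (k + 1) ω' = X k ω' + 1}.indicator (fun _ => (1 : ℝ)) | 𝓕 k] :=
    fun k => condExp_nonneg (ae_of_all ℙ (Set.indicator_nonneg fun _ _ => zero_le_one))
  filter_upwards [hpath, hM, ae_all_iff.2 hcond, ae_all_iff.2 hp] with ω hω ⟨l, hl⟩ hGω hpω
  exact hω.le_liminf_div (r := 1 + ε) (by linarith) hpω
    (fun k hk => (hdomin _ ⟨hω.div_pos k, hk⟩).le.trans (hGω k)) hl

/-- Stochastic domination for urn-like processes: if `(X n)` is an integer-valued adapted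
process with `X 0 = 1`, `X (n+1) ∈ {X n, X n + 1}`, and conditional probability of an
increase, given `𝓕 n`, at least `G (X n / (n+1))`, where `G : [0,1] → [0,1]` satisfies
`G x > (1+ε) x` on `(0, c)` for some `c, ε > 0`, then almost surely
`liminf X n / (n+1) ≥ c`. -/
theorem statement1
    {Ω : Type*} [m0 : MeasurableSpace Ω] (ℙ : Measure Ω) [IsProbabilityMeasure ℙ]
    (𝓕 : Filtration ℕ m0)
    (X : ℕ → Ω → ℕ)
    (hadapted : ∀ n, Measurable[𝓕 n] (X n))
    (hX0 : ∀ᵐ ω ∂ℙ, X 0 ω = 1)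
    (hstep : ∀ n, ∀ᵐ ω ∂ℙ, X (n+1) ω = X n ω ∨ X (n+1) ω = X n ω + 1)
    (G : ℝ → ℝ)
    (hG_range : ∀ x ∈ Set.Icc (0:ℝ) 1, G x ∈ Set.Icc (0:ℝ) 1)
    (hcond : ∀ n, ∀ᵐ ω ∂ℙ,
      G ((X n ω : ℝ) / (n+1)) ≤
        (ℙ[Set.indicator {ω' | X (n+1) ω' = X n ω' + 1} (fun _ => (1:ℝ)) | 𝓕 n]) ω)
    (c ε : ℝ) (hc : 0 < c) (hε : 0 < ε)
    (hdomin : ∀ x ∈ Set.Ioo (0:ℝ) c, (1 + ε) * x < G x) :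
    ∀ᵐ ω ∂ℙ, c ≤ liminf (fun n => (X n ω : ℝ) / (n+1)) atTop :=
  statement1_general (m0 := m0) ℙ 𝓕 X hadapted hX0 hstep G hcond c ε hε hdomin
end

section
/- Fix α ∈ (0,1). For c = (c1,c2,c3) ∈ (0,∞)³ define P1(c) = (α·c1·c2 + c1·c3)/(c1·c2 + c1·c3 + c2·c3), P2(c) = 1 − P1(c), and P3(c) = (α·c2·c3 + (1−α)·c1·c3)/(c1·c2 + c1·c3 + c2·c3). Let δ ∈ [0,1), and let x = (x1,x2,x3), y = (y1,y2,y3) ∈ (0,∞)³ satisfy (1−δ)·y_i ≤ x_i ≤ (1+δ)·y_i for i = 1,2,3. Then for each i ∈ {1,2,3}, ((1−δ)/(1+δ))·P_i(y) ≤ P_i(x) ≤ ((1+δ)/(1−δ))·P_i(y). -/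
/-!
Each `Pᵢ` is a nonnegative combination of the three shares `cᵢcⱼ / (c₁c₂ + c₁c₃ + c₂c₃)`.
Such a share equals `1 / (1 + cₖ/cᵢ + cₖ/cⱼ)`, and every ratio `cₖ/cᵢ` changes by at most a factor
`(1 + δ)/(1 - δ)` between `y` and `x`, so each share does too; nonnegative combinations preserve
such two-sided ratio bounds.
-/

/-- `P1 α c1 c2 c3` is the probability that an ant reinforces branch 1 of the triangle,
given effective conductances `c1, c2, c3` of the three branches. -/
noncomputable def P1 (α c1 c2 c3 : ℝ) : ℝ :=
  (α * c1 * c2 + c1 * c3) / (c1 * c2 + c1 * c3 + c2 * c3)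

/-- `P2 α c1 c2 c3 = 1 - P1 α c1 c2 c3`, the probability of reinforcing branch 2. -/
noncomputable def P2 (α c1 c2 c3 : ℝ) : ℝ := 1 - P1 α c1 c2 c3

/-- `P3 α c1 c2 c3`, the probability of reinforcing branch 3. -/
noncomputable def P3 (α c1 c2 c3 : ℝ) : ℝ :=
  (α * c2 * c3 + (1 - α) * c1 * c3) / (c1 * c2 + c1 * c3 + c2 * c3)

noncomputable def pairShare (a b c : ℝ) : ℝ := a * b / (a * b + a * c + b * c)

lemma P1_eq_pairShare (α c1 c2 c3 : ℝ) :
    P1 α c1 c2 c3 = α * pairShare c1 c2 c3 + pairShare c1 c3 c2 := by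
  unfold P1 pairShare; ring

lemma P3_eq_pairShare (α c1 c2 c3 : ℝ) :
    P3 α c1 c2 c3 = α * pairShare c2 c3 c1 + (1 - α) * pairShare c1 c3 c2 := by
  unfold P3 pairShare; ring

lemma pairShare_add_pairShare_add_pairShare (c1 c2 c3 : ℝ)
    (h : c1 * c2 + c1 * c3 + c2 * c3 ≠ 0) :
    pairShare c1 c2 c3 + pairShare c1 c3 c2 + pairShare c2 c3 c1 = 1 := by
  unfold pairShare; rw [← div_self h]; ring

lemma P2_eq_pairShare (α c1 c2 c3 : ℝ) (h : c1 * c2 + c1 * c3 + c2 * c3 ≠ 0) :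
    P2 α c1 c2 c3 = (1 - α) * pairShare c1 c2 c3 + pairShare c2 c3 c1 := by
  rw [P2, P1_eq_pairShare]; linarith [pairShare_add_pairShare_add_pairShare c1 c2 c3 h]

/-- Division-free form of `l ≤ a / b ≤ u`. -/
def RatioBetween (l u a b : ℝ) : Prop := l * b ≤ a ∧ a ≤ u * b

lemma RatioBetween.add {l u a b a' b' : ℝ} (h : RatioBetween l u a b)
    (h' : RatioBetween l u a' b') :
    RatioBetween l u (a + a') (b + b') :=
  ⟨by linarith [h.1, h'.1], by linarith [h.2, h'.2]⟩

lemma RatioBetween.const_mul {l u a b w : ℝ} (h : RatioBetween l u a b) (hw : 0 ≤ w) :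
    RatioBetween l u (w * a) (w * b) := by
  constructor <;> nlinarith [h.1, h.2]

/-- The constants are free so that exchanging `x` and `y` gives both directions of the bound. -/
lemma mul_mul_pairShare_le {a b c d x1 x2 x3 y1 y2 y3 : ℝ}
    (ha : 0 ≤ a) (hc : 0 ≤ c) (hacbd : a * c ≤ b * d)
    (hx1 : 0 < x1) (hx2 : 0 < x2) (hx3 : 0 < x3) (hy1 : 0 < y1) (hy2 : 0 < y2) (hy3 : 0 < y3)
    (h1 : a * x1 ≤ b * y1) (h2 : a * x2 ≤ b * y2) (h3 : c * y3 ≤ d * x3) :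
    a * c * pairShare x1 x2 x3 ≤ b * d * pairShare y1 y2 y3 := by
  unfold pairShare
  rw [mul_div_assoc', mul_div_assoc', div_le_div_iff₀ (by positivity) (by positivity)]
  have h13 := mul_le_mul h1 h3 (by positivity) (by linarith [mul_nonneg ha hx1.le])
  have h23 := mul_le_mul h2 h3 (by positivity) (by linarith [mul_nonneg ha hx2.le])
  nlinarith [mul_le_mul_of_nonneg_left hacbd (by positivity : 0 ≤ x1 * x2 * y1 * y2),
    mul_le_mul_of_nonneg_left h13 (by positivity : 0 ≤ x2 * y2),
    mul_le_mul_of_nonneg_left h23 (by positivity : 0 ≤ x1 * y1)]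

lemma pairShare_ratioBetween {s t x1 x2 x3 y1 y2 y3 : ℝ} (ht : 0 < t) (hts : t ≤ s)
    (hx1 : 0 < x1) (hx2 : 0 < x2) (hx3 : 0 < x3) (hy1 : 0 < y1) (hy2 : 0 < y2) (hy3 : 0 < y3)
    (h1 : RatioBetween t s x1 y1) (h2 : RatioBetween t s x2 y2) (h3 : RatioBetween t s x3 y3) :
    RatioBetween (t / s) (s / t) (pairShare x1 x2 x3) (pairShare y1 y2 y3) := by
  have hs : 0 < s := ht.trans_le hts
  constructor
  · have h := mul_mul_pairShare_le (b := 1) (d := s) ht.le zero_le_one (by simpa using hts)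
      hy1 hy2 hy3 hx1 hx2 hx3 (by simpa using h1.1) (by simpa using h2.1) (by simpa using h3.2)
    rw [div_mul_eq_mul_div, div_le_iff₀ hs]
    linarith
  · have h := mul_mul_pairShare_le (b := s) (d := 1) zero_le_one ht.le (by simpa using hts)
      hx1 hx2 hx3 hy1 hy2 hy3 (by simpa using h1.2) (by simpa using h2.2) (by simpa using h3.1)
    rw [div_mul_eq_mul_div, le_div_iff₀ ht]
    linarith

/-- If `x` and `y` are coordinatewise within a factor `1 ± δ` of each other, then the
reinforcement probabilities `P i` at `x` and `y` are within a factor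
`(1-δ)/(1+δ) … (1+δ)/(1-δ)` of each other, for `i = 1, 2, 3`. -/
theorem statement4 (α : ℝ) (hα : α ∈ Set.Ioo (0:ℝ) 1) (δ : ℝ) (hδ : δ ∈ Set.Ico (0:ℝ) 1)
    (x1 x2 x3 y1 y2 y3 : ℝ)
    (hx1 : 0 < x1) (hx2 : 0 < x2) (hx3 : 0 < x3)
    (hy1 : 0 < y1) (hy2 : 0 < y2) (hy3 : 0 < y3)
    (h1l : (1 - δ) * y1 ≤ x1) (h1u : x1 ≤ (1 + δ) * y1)
    (h2l : (1 - δ) * y2 ≤ x2) (h2u : x2 ≤ (1 + δ) * y2)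
    (h3l : (1 - δ) * y3 ≤ x3) (h3u : x3 ≤ (1 + δ) * y3) :
    ((1 - δ) / (1 + δ) * P1 α y1 y2 y3 ≤ P1 α x1 x2 x3 ∧
      P1 α x1 x2 x3 ≤ (1 + δ) / (1 - δ) * P1 α y1 y2 y3) ∧
    ((1 - δ) / (1 + δ) * P2 α y1 y2 y3 ≤ P2 α x1 x2 x3 ∧
      P2 α x1 x2 x3 ≤ (1 + δ) / (1 - δ) * P2 α y1 y2 y3) ∧
    ((1 - δ) / (1 + δ) * P3 α y1 y2 y3 ≤ P3 α x1 x2 x3 ∧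
      P3 α x1 x2 x3 ≤ (1 + δ) / (1 - δ) * P3 α y1 y2 y3) := by
  obtain ⟨hα0, hα1⟩ := hα
  obtain ⟨hδ0, hδ1⟩ := hδ
  have ht : 0 < 1 - δ := by linarith
  have hts : 1 - δ ≤ 1 + δ := by linarith
  have q12 := pairShare_ratioBetween ht hts hx1 hx2 hx3 hy1 hy2 hy3 ⟨h1l, h1u⟩ ⟨h2l, h2u⟩ ⟨h3l, h3u⟩
  have q13 := pairShare_ratioBetween ht hts hx1 hx3 hx2 hy1 hy3 hy2 ⟨h1l, h1u⟩ ⟨h3l, h3u⟩ ⟨h2l, h2u⟩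
  have q23 := pairShare_ratioBetween ht hts hx2 hx3 hx1 hy2 hy3 hy1 ⟨h2l, h2u⟩ ⟨h3l, h3u⟩ ⟨h1l, h1u⟩
  rw [P1_eq_pairShare, P1_eq_pairShare, P2_eq_pairShare α x1 x2 x3 (by positivity),
    P2_eq_pairShare α y1 y2 y3 (by positivity), P3_eq_pairShare, P3_eq_pairShare]
  exact ⟨(q12.const_mul hα0.le).add q13, (q12.const_mul (sub_nonneg.2 hα1.le)).add q23,
    (q23.const_mul hα0.le).add (q13.const_mul (sub_nonneg.2 hα1.le))⟩
end

section
/- Fix α ∈ (0,1) and positive reals ℓ1 ≤ ℓ2 with ℓ2 < ℓ1 + ℓ3 and ℓ3 < ℓ1 + ℓ2. Define N1(w1,w3) = w1·(1−w1)·(ℓ3·(α−w1) + (ℓ2−ℓ1)·w3) and N3(w1,w3) = w3·(ℓ2·(1−α)·w1 + ℓ1·α·(1−w1) − ℓ3·w1·(1−w1) − w3·(ℓ1 + w1·(ℓ2−ℓ1))). Then for all (w1,w3) ∈ [0,1]², N1(w1,w3) = 0 and N3(w1,w3) = 0 hold simultaneously if and only if (w1,w3) ∈ {(0,0), (0,α),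 (α,0), (β1,β3), (1,1−α), (1,0)}, where β1 = α·ℓ1·(ℓ3+ℓ2−ℓ1)/(ℓ1·ℓ3 + (ℓ2−ℓ1)·((1−α)·(ℓ3−ℓ2) + α·ℓ1)) and β3 = α·(1−α)·ℓ3·(ℓ1+ℓ2−ℓ3)/(α·(ℓ2−ℓ1)·(ℓ1+ℓ2−ℓ3) + ℓ2·(ℓ1−ℓ2+ℓ3)). -/
/-!
Off the edges `w1 = 0`, `w1 = 1` and `w3 = 0`, where the equations reduce to a quadratic in one
variable, the common zeros are those of the brackets `B1 = ℓ3 (α - w1) + (ℓ2 - ℓ1) w3` and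
`B3 = N3 / w3`. Reducing `ℓ3 B3` modulo `B1` (as polynomials in `w1`) leaves a remainder in which
the `w3²` terms cancel, and the combination `(ℓ1 + w1 (ℓ2 - ℓ1)) B1 + (ℓ2 - ℓ1) B3` loses both `w3`
and `w1²`. So `B1 = B3 = 0` is equivalent to a diagonal linear system `w1 D = p1`, `w3 D = p3`,
where `D` is the denominator of both `β1` and `β3`, written in two different ways.
-/

def fixedPointDenom (α ℓ1 ℓ2 ℓ3 : ℝ) : ℝ :=
  ℓ1 * ℓ3 + (ℓ2 - ℓ1) * ((1 - α) * (ℓ3 - ℓ2) + α * ℓ1)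

theorem fixedPointDenom_eq (α ℓ1 ℓ2 ℓ3 : ℝ) :
    fixedPointDenom α ℓ1 ℓ2 ℓ3 = α * (ℓ2 - ℓ1) * (ℓ1 + ℓ2 - ℓ3) + ℓ2 * (ℓ1 - ℓ2 + ℓ3) := by
  unfold fixedPointDenom
  ring

theorem fixedPointDenom_pos {α ℓ1 ℓ2 ℓ3 : ℝ} (hα : 0 ≤ α) (h2 : 0 < ℓ2) (h12 : ℓ1 ≤ ℓ2)
    (h213 : ℓ2 < ℓ1 + ℓ3) (h312 : ℓ3 ≤ ℓ1 + ℓ2) : 0 < fixedPointDenom α ℓ1 ℓ2 ℓ3 := by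
  rw [fixedPointDenom_eq]
  exact add_pos_of_nonneg_of_pos
    (mul_nonneg (mul_nonneg hα (sub_nonneg.2 h12)) (by linarith)) (mul_pos h2 (by linarith))

theorem brackets_eq_zero_iff {α ℓ1 ℓ2 ℓ3 : ℝ} (h3 : ℓ3 ≠ 0) (hD : fixedPointDenom α ℓ1 ℓ2 ℓ3 ≠ 0)
    (w1 w3 : ℝ) :
    (ℓ3 * (α - w1) + (ℓ2 - ℓ1) * w3 = 0 ∧
      ℓ2 * (1 - α) * w1 + ℓ1 * α * (1 - w1) - ℓ3 * w1 * (1 - w1)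
        - w3 * (ℓ1 + w1 * (ℓ2 - ℓ1)) = 0) ↔
    (w1 = α * ℓ1 * (ℓ3 + ℓ2 - ℓ1) / fixedPointDenom α ℓ1 ℓ2 ℓ3 ∧
      w3 = α * (1 - α) * ℓ3 * (ℓ1 + ℓ2 - ℓ3) / fixedPointDenom α ℓ1 ℓ2 ℓ3) := by
  rw [eq_div_iff hD, eq_div_iff hD]
  unfold fixedPointDenom at hD ⊢
  constructor
  · rintro ⟨hB1, hB3⟩
    exact ⟨by linear_combination -(ℓ1 + w1 * (ℓ2 - ℓ1)) * hB1 - (ℓ2 - ℓ1) * hB3,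
      by linear_combination (α * ℓ1 + (ℓ3 - ℓ2) * (1 - α) - ℓ3 * w1) * hB1 - ℓ3 * hB3⟩
  · rintro ⟨hw1, hw3⟩
    have hB1 : ℓ3 * (α - w1) + (ℓ2 - ℓ1) * w3 = 0 := by
      refine (mul_eq_zero.1 ?_).resolve_left hD
      linear_combination -ℓ3 * hw1 + (ℓ2 - ℓ1) * hw3
    refine ⟨hB1, (mul_eq_zero.1 ?_).resolve_left h3⟩
    linear_combination (α * ℓ1 + (ℓ3 - ℓ2) * (1 - α) - ℓ3 * w1) * hB1 - hw3

theorem mul_mul_sub_eq_zero_iff {c a w : ℝ} (hc : c ≠ 0) :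
    w * (c * (a - w)) = 0 ↔ w = 0 ∨ w = a := by
  simp [hc, sub_eq_zero, eq_comm]

/-- The common zeros, on `[0,1]²`, of the numerators `N1` and `N3` of the two coordinates
of the vector field driving the stochastic approximation for the two-nest ants process on
the `(ℓ1,ℓ2,ℓ3)`-triangle are exactly the six points
`(0,0), (0,α), (α,0), (β1,β3), (1,1-α), (1,0)`. -/
theorem statement7 (α ℓ1 ℓ2 ℓ3 : ℝ) (hα : α ∈ Set.Ioo (0:ℝ) 1)
    (h1 : 0 < ℓ1) (h2 : 0 < ℓ2) (h3 : 0 < ℓ3) (h12 : ℓ1 ≤ ℓ2)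
    (h213 : ℓ2 < ℓ1 + ℓ3) (h312 : ℓ3 < ℓ1 + ℓ2) :
    ∀ w1 ∈ Set.Icc (0:ℝ) 1, ∀ w3 ∈ Set.Icc (0:ℝ) 1,
      (w1 * (1 - w1) * (ℓ3 * (α - w1) + (ℓ2 - ℓ1) * w3) = 0 ∧
        w3 * (ℓ2 * (1 - α) * w1 + ℓ1 * α * (1 - w1) - ℓ3 * w1 * (1 - w1)
              - w3 * (ℓ1 + w1 * (ℓ2 - ℓ1))) = 0)
      ↔ (w1, w3) ∈ ({((0:ℝ), (0:ℝ)), (0, α), (α, 0),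
          (α * ℓ1 * (ℓ3 + ℓ2 - ℓ1)
              / (ℓ1 * ℓ3 + (ℓ2 - ℓ1) * ((1 - α) * (ℓ3 - ℓ2) + α * ℓ1)),
            α * (1 - α) * ℓ3 * (ℓ1 + ℓ2 - ℓ3)
              / (α * (ℓ2 - ℓ1) * (ℓ1 + ℓ2 - ℓ3) + ℓ2 * (ℓ1 - ℓ2 + ℓ3))),
          (1, 1 - α), (1, 0)} : Set (ℝ × ℝ)) := by
  have hD := fixedPointDenom_pos hα.1.le h2 h12 h213 h312.le
  intro w1 _ w3 _
  rw [← fixedPointDenom.eq_1, ← fixedPointDenom_eq]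
  simp only [Set.mem_insert_iff, Set.mem_singleton_iff, Prod.mk.injEq]
  rw [← brackets_eq_zero_iff h3.ne' hD.ne']
  constructor
  · rintro ⟨hN1, hN3⟩
    rcases mul_eq_zero.1 hN1 with h | hB1
    · rcases mul_eq_zero.1 h with rfl | h
      · have : w3 * (ℓ1 * (α - w3)) = 0 := by linear_combination hN3
        rcases (mul_mul_sub_eq_zero_iff h1.ne').1 this with rfl | rfl <;> simp
      · obtain rfl : w1 = 1 := by linarith
        have : w3 * (ℓ2 * (1 - α - w3)) = 0 := by linear_combination hN3
        rcases (mul_mul_sub_eq_zero_iff h2.ne').1 this with rfl | rfl <;> simp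
    · rcases mul_eq_zero.1 hN3 with rfl | hB3
      · obtain rfl : w1 = α := by simpa [h3.ne', sub_eq_zero, eq_comm] using hB1
        simp
      · tauto
  · rintro (⟨rfl, rfl⟩ | ⟨rfl, rfl⟩ | ⟨rfl, rfl⟩ | ⟨hB1, hB3⟩ | ⟨rfl, rfl⟩ | ⟨rfl, rfl⟩)
    · exact ⟨by ring, by ring⟩
    · exact ⟨by ring, by ring⟩
    · exact ⟨by ring, by ring⟩
    · exact ⟨mul_eq_zero_of_right _ hB1, mul_eq_zero_of_right _ hB3⟩
    · exact ⟨by ring, by ring⟩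
    · exact ⟨by ring, by ring⟩
end

section
/- Fix α ∈ (0,1) and positive reals ℓ1, ℓ2, ℓ3 with ℓ1 ≤ ℓ2 ≤ ℓ1 + ℓ3 and ℓ3 ≤ ℓ1 + ℓ2. Then β1 ≥ α, where β1 = α·ℓ1·(ℓ3+ℓ2−ℓ1)/(ℓ1·ℓ3 + (ℓ2−ℓ1)·((1−α)·(ℓ3−ℓ2) + α·ℓ1)); in particular β1 > 0. Moreover β1 − α = α·(ℓ2−ℓ1)·(1−α)·(ℓ1+ℓ2−ℓ3)/(ℓ1·ℓ3 + (ℓ2−ℓ1)·((1−α)·(ℓ3−ℓ2) + α·ℓ1)). -/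
/-!
The denominator `D` is the convex combination `α ℓ1 (ℓ3 + ℓ2 - ℓ1) + (1 - α) ℓ2 (ℓ1 + ℓ3 - ℓ2)`
of two quantities that the triangle inequalities make nonnegative, the first one positive; hence
`D > 0`. Subtracting `α D` from the numerator leaves `α (1 - α) (ℓ2 - ℓ1) (ℓ1 + ℓ2 - ℓ3) ≥ 0`.
-/

lemma ants_denom_eq_convex_comb (α ℓ1 ℓ2 ℓ3 : ℝ) :
    ℓ1 * ℓ3 + (ℓ2 - ℓ1) * ((1 - α) * (ℓ3 - ℓ2) + α * ℓ1)
      = α * (ℓ1 * (ℓ3 + ℓ2 - ℓ1)) + (1 - α) * (ℓ2 * (ℓ1 + ℓ3 - ℓ2)) := by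
  ring

lemma ants_denom_pos {α ℓ1 ℓ2 ℓ3 : ℝ} (hα0 : 0 < α) (hα1 : α ≤ 1) (h1 : 0 < ℓ1) (h3 : 0 < ℓ3)
    (h12 : ℓ1 ≤ ℓ2) (h213 : ℓ2 ≤ ℓ1 + ℓ3) :
    0 < ℓ1 * ℓ3 + (ℓ2 - ℓ1) * ((1 - α) * (ℓ3 - ℓ2) + α * ℓ1) := by
  rw [ants_denom_eq_convex_comb]
  have hfirst : 0 < α * (ℓ1 * (ℓ3 + ℓ2 - ℓ1)) := by
    have : 0 < ℓ3 + ℓ2 - ℓ1 := by linarith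
    positivity
  have hsecond : 0 ≤ (1 - α) * (ℓ2 * (ℓ1 + ℓ3 - ℓ2)) :=
    mul_nonneg (by linarith) (mul_nonneg (by linarith) (by linarith))
  exact add_pos_of_pos_of_nonneg hfirst hsecond

lemma ants_num_sub_mul_denom (α ℓ1 ℓ2 ℓ3 : ℝ) :
    α * ℓ1 * (ℓ3 + ℓ2 - ℓ1) - α * (ℓ1 * ℓ3 + (ℓ2 - ℓ1) * ((1 - α) * (ℓ3 - ℓ2) + α * ℓ1))
      = α * (ℓ2 - ℓ1) * (1 - α) * (ℓ1 + ℓ2 - ℓ3) := by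
  ring

theorem statement10_general (α ℓ1 ℓ2 ℓ3 : ℝ) (hα : α ∈ Set.Ioo (0:ℝ) 1)
    (h1 : 0 < ℓ1) (h3 : 0 < ℓ3)
    (h12 : ℓ1 ≤ ℓ2) (h213 : ℓ2 ≤ ℓ1 + ℓ3) (h312 : ℓ3 ≤ ℓ1 + ℓ2) :
    α ≤ α * ℓ1 * (ℓ3 + ℓ2 - ℓ1)
        / (ℓ1 * ℓ3 + (ℓ2 - ℓ1) * ((1 - α) * (ℓ3 - ℓ2) + α * ℓ1)) ∧
    0 < α * ℓ1 * (ℓ3 + ℓ2 - ℓ1)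
        / (ℓ1 * ℓ3 + (ℓ2 - ℓ1) * ((1 - α) * (ℓ3 - ℓ2) + α * ℓ1)) ∧
    α * ℓ1 * (ℓ3 + ℓ2 - ℓ1)
        / (ℓ1 * ℓ3 + (ℓ2 - ℓ1) * ((1 - α) * (ℓ3 - ℓ2) + α * ℓ1)) - α
      = α * (ℓ2 - ℓ1) * (1 - α) * (ℓ1 + ℓ2 - ℓ3)
        / (ℓ1 * ℓ3 + (ℓ2 - ℓ1) * ((1 - α) * (ℓ3 - ℓ2) + α * ℓ1)) := by
  obtain ⟨hα0, hα1⟩ := hα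
  have hD := ants_denom_pos hα0 hα1.le h1 h3 h12 h213
  have hdiff : α * ℓ1 * (ℓ3 + ℓ2 - ℓ1)
        / (ℓ1 * ℓ3 + (ℓ2 - ℓ1) * ((1 - α) * (ℓ3 - ℓ2) + α * ℓ1)) - α
      = α * (ℓ2 - ℓ1) * (1 - α) * (ℓ1 + ℓ2 - ℓ3)
        / (ℓ1 * ℓ3 + (ℓ2 - ℓ1) * ((1 - α) * (ℓ3 - ℓ2) + α * ℓ1)) := by
    rw [div_sub' hD.ne', mul_comm _ α, ants_num_sub_mul_denom]
  have hge : α ≤ α * ℓ1 * (ℓ3 + ℓ2 - ℓ1)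
        / (ℓ1 * ℓ3 + (ℓ2 - ℓ1) * ((1 - α) * (ℓ3 - ℓ2) + α * ℓ1)) := by
    rw [← sub_nonneg, hdiff]
    have : 0 ≤ ℓ1 + ℓ2 - ℓ3 := by linarith
    have : 0 ≤ ℓ2 - ℓ1 := by linarith
    have : 0 ≤ 1 - α := by linarith
    positivity
  exact ⟨hge, hα0.trans_le hge, hdiff⟩

/-- The first coordinate `β1` of the interior zero of the vector field of the stochastic
approximation for the two-nest ants process on the `(ℓ1,ℓ2,ℓ3)`-triangle satisfies
`β1 ≥ α` (in particular `β1 > 0`), together with the closed form for `β1 - α`. -/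
theorem statement10 (α ℓ1 ℓ2 ℓ3 : ℝ) (hα : α ∈ Set.Ioo (0:ℝ) 1)
    (h1 : 0 < ℓ1) (h2 : 0 < ℓ2) (h3 : 0 < ℓ3)
    (h12 : ℓ1 ≤ ℓ2) (h213 : ℓ2 ≤ ℓ1 + ℓ3) (h312 : ℓ3 ≤ ℓ1 + ℓ2) :
    α ≤ α * ℓ1 * (ℓ3 + ℓ2 - ℓ1)
        / (ℓ1 * ℓ3 + (ℓ2 - ℓ1) * ((1 - α) * (ℓ3 - ℓ2) + α * ℓ1)) ∧
    0 < α * ℓ1 * (ℓ3 + ℓ2 - ℓ1)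
        / (ℓ1 * ℓ3 + (ℓ2 - ℓ1) * ((1 - α) * (ℓ3 - ℓ2) + α * ℓ1)) ∧
    α * ℓ1 * (ℓ3 + ℓ2 - ℓ1)
        / (ℓ1 * ℓ3 + (ℓ2 - ℓ1) * ((1 - α) * (ℓ3 - ℓ2) + α * ℓ1)) - α
      = α * (ℓ2 - ℓ1) * (1 - α) * (ℓ1 + ℓ2 - ℓ3)
        / (ℓ1 * ℓ3 + (ℓ2 - ℓ1) * ((1 - α) * (ℓ3 - ℓ2) + α * ℓ1)) :=
  statement10_general α ℓ1 ℓ2 ℓ3 hα h1 h3 h12 h213 h312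
end

section
/- Fix a real α and positive reals ℓ1, ℓ2, ℓ3. For w1 ∈ (0,1) and w3 ∈ (0,1], define D(w1,w3) = w3·(ℓ1 + w1·(ℓ2−ℓ1)) + ℓ3·w1·(1−w1), g(w1,w3) = −D(w1,w3)/(w1·w3·(1−w1)), F1(w1,w3) = w1·(1−w1)·(ℓ3·(α−w1) + (ℓ2−ℓ1)·w3)/D(w1,w3) and F3(w1,w3) = w3·(ℓ2·(1−α)·w1 + ℓ1·α·(1−w1) − ℓ3·w1·(1−w1) − w3·(ℓ1 + w1·(ℓ2−ℓ1)))/D(w1,w3). Then for every such (w1,w3): (i) the function u ↦ g(u,w3)·F1(u,w3) has derivative ℓ3/w3 at u = w1; (ii) the function v ↦ g(w1,v)·F3(w1,v) has derivative (ℓ2−ℓ1)/(1−w1) + ℓ1/(w1·(1−w1)) at v = w3; and (iii) ℓ3/w3 + (ℓ2−ℓ1)/(1−w1) + ℓ1/(w1·(1−w1)) = −g(w1,w3) > 0. -/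
/-!
The Dulac function `g = -D / (w1 w3 (1 - w1))` is built so that the common denominator `D` of
the drift cancels: `g F1` is affine in `w1` with slope `ℓ3 / w3`, and `g F3` is affine in `w3`
with slope `(ℓ1 + w1 (ℓ2 - ℓ1)) / (w1 (1 - w1))`. Adding the slopes gives `-g`, which is positive
because `ℓ1 + w1 (ℓ2 - ℓ1) = (1 - w1) ℓ1 + w1 ℓ2` is a convex combination of positive numbers,
so `D > 0`.
-/

open Filter Topology Set

lemma lerp_pos {a b t : ℝ} (ha : 0 < a) (hb : 0 < b) (ht₀ : 0 ≤ t) (ht₁ : t ≤ 1) :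
    0 < a + t * (b - a) := by
  nlinarith [mul_nonneg ht₀ hb.le, mul_nonneg (sub_nonneg.2 ht₁) ha.le]

lemma hasDerivAt_of_eventuallyEq_affine {𝕜 : Type*} [NontriviallyNormedField 𝕜] {f : 𝕜 → 𝕜}
    {a b x : 𝕜} (h : ∀ᶠ y in 𝓝 x, f y = a * y + b) : HasDerivAt f a x := by
  simpa using (((hasDerivAt_id x).const_mul a).add_const b).congr_of_eventuallyEq h

namespace TwoNestAnts

variable (α ℓ1 ℓ2 ℓ3 : ℝ)

noncomputable def denom (w1 w3 : ℝ) : ℝ := w3 * (ℓ1 + w1 * (ℓ2 - ℓ1)) + ℓ3 * w1 * (1 - w1)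

noncomputable def dulac (w1 w3 : ℝ) : ℝ := -(denom ℓ1 ℓ2 ℓ3 w1 w3 / (w1 * w3 * (1 - w1)))

noncomputable def drift₁ (w1 w3 : ℝ) : ℝ :=
  w1 * (1 - w1) * (ℓ3 * (α - w1) + (ℓ2 - ℓ1) * w3) / denom ℓ1 ℓ2 ℓ3 w1 w3

noncomputable def drift₃ (w1 w3 : ℝ) : ℝ :=
  w3 * (ℓ2 * (1 - α) * w1 + ℓ1 * α * (1 - w1) - ℓ3 * w1 * (1 - w1)
    - w3 * (ℓ1 + w1 * (ℓ2 - ℓ1))) / denom ℓ1 ℓ2 ℓ3 w1 w3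

variable {α ℓ1 ℓ2 ℓ3}

lemma denom_pos (h1 : 0 < ℓ1) (h2 : 0 < ℓ2) (h3 : 0 < ℓ3) {w1 w3 : ℝ} (hw1 : w1 ∈ Ioo 0 1)
    (hw3 : 0 ≤ w3) : 0 < denom ℓ1 ℓ2 ℓ3 w1 w3 := by
  obtain ⟨hw1₀, hw1₁⟩ := hw1
  have := lerp_pos h1 h2 hw1₀.le hw1₁.le
  have := sub_pos.2 hw1₁
  unfold denom
  positivity

lemma dulac_mul_drift₁ {w1 w3 : ℝ} (hw1 : w1 ≠ 0) (hw1' : 1 - w1 ≠ 0) (hw3 : w3 ≠ 0)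
    (hD : denom ℓ1 ℓ2 ℓ3 w1 w3 ≠ 0) :
    dulac ℓ1 ℓ2 ℓ3 w1 w3 * drift₁ α ℓ1 ℓ2 ℓ3 w1 w3
      = ℓ3 / w3 * w1 + -(ℓ3 * α + (ℓ2 - ℓ1) * w3) / w3 := by
  unfold dulac drift₁
  field_simp
  ring

lemma dulac_mul_drift₃ {w1 w3 : ℝ} (hw1 : w1 ≠ 0) (hw1' : 1 - w1 ≠ 0) (hw3 : w3 ≠ 0)
    (hD : denom ℓ1 ℓ2 ℓ3 w1 w3 ≠ 0) :
    dulac ℓ1 ℓ2 ℓ3 w1 w3 * drift₃ α ℓ1 ℓ2 ℓ3 w1 w3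
      = (ℓ1 + w1 * (ℓ2 - ℓ1)) / (w1 * (1 - w1)) * w3
        + -(ℓ2 * (1 - α) * w1 + ℓ1 * α * (1 - w1) - ℓ3 * w1 * (1 - w1)) / (w1 * (1 - w1)) := by
  unfold dulac drift₃
  field_simp
  ring

lemma lerp_div_mul_one_sub {w1 : ℝ} (hw1 : w1 ≠ 0) (hw1' : 1 - w1 ≠ 0) :
    (ℓ1 + w1 * (ℓ2 - ℓ1)) / (w1 * (1 - w1)) = (ℓ2 - ℓ1) / (1 - w1) + ℓ1 / (w1 * (1 - w1)) := by
  field_simp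
  ring

section

variable (h1 : 0 < ℓ1) (h2 : 0 < ℓ2) (h3 : 0 < ℓ3) {w1 w3 : ℝ}
include h1 h2 h3

lemma hasDerivAt_dulac_mul_drift₁ (hw1 : w1 ∈ Ioo 0 1) (hw3 : 0 < w3) :
    HasDerivAt (fun u => dulac ℓ1 ℓ2 ℓ3 u w3 * drift₁ α ℓ1 ℓ2 ℓ3 u w3) (ℓ3 / w3) w1 :=
  hasDerivAt_of_eventuallyEq_affine <| eventually_of_mem (Ioo_mem_nhds hw1.1 hw1.2) fun _ hu =>
    dulac_mul_drift₁ hu.1.ne' (sub_pos.2 hu.2).ne' hw3.ne' (denom_pos h1 h2 h3 hu hw3.le).ne'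

lemma hasDerivAt_dulac_mul_drift₃ (hw1 : w1 ∈ Ioo 0 1) (hw3 : 0 < w3) :
    HasDerivAt (fun v => dulac ℓ1 ℓ2 ℓ3 w1 v * drift₃ α ℓ1 ℓ2 ℓ3 w1 v)
      ((ℓ2 - ℓ1) / (1 - w1) + ℓ1 / (w1 * (1 - w1))) w3 := by
  have hw1₀ := hw1.1.ne'
  have hw1₁ := (sub_pos.2 hw1.2).ne'
  rw [← lerp_div_mul_one_sub hw1₀ hw1₁]
  exact hasDerivAt_of_eventuallyEq_affine <| eventually_of_mem (Ioi_mem_nhds hw3)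
    fun v hv => dulac_mul_drift₃ hw1₀ hw1₁ hv.ne' (denom_pos h1 h2 h3 hw1 hv.le).ne'

lemma neg_dulac_pos (hw1 : w1 ∈ Ioo 0 1) (hw3 : 0 < w3) : 0 < -dulac ℓ1 ℓ2 ℓ3 w1 w3 := by
  have := denom_pos h1 h2 h3 hw1 hw3.le
  have := hw1.1
  have : 0 < 1 - w1 := sub_pos.2 hw1.2
  rw [dulac, neg_neg]
  positivity

end

lemma slope_sum_eq_neg_dulac {w1 w3 : ℝ} (hw1 : w1 ≠ 0) (hw1' : 1 - w1 ≠ 0) (hw3 : w3 ≠ 0) :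
    ℓ3 / w3 + ((ℓ2 - ℓ1) / (1 - w1) + ℓ1 / (w1 * (1 - w1))) = -dulac ℓ1 ℓ2 ℓ3 w1 w3 := by
  unfold dulac denom
  field_simp
  ring

end TwoNestAnts

open TwoNestAnts in
/-- The Bendixson–Dulac condition for the vector field `(F1, F3)` with Dulac function `g`:
on `(0,1) × (0,1]`, (i) `∂(g F1)/∂w1 = ℓ3/w3`, (ii)
`∂(g F3)/∂w3 = (ℓ2-ℓ1)/(1-w1) + ℓ1/(w1 (1-w1))`, and (iii) their sum equals
`-g(w1,w3) > 0`. -/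
theorem statement13 (α ℓ1 ℓ2 ℓ3 : ℝ) (h1 : 0 < ℓ1) (h2 : 0 < ℓ2) (h3 : 0 < ℓ3)
    (w1 w3 : ℝ) (hw1 : w1 ∈ Set.Ioo (0:ℝ) 1) (hw3 : w3 ∈ Set.Ioc (0:ℝ) 1) :
    HasDerivAt (fun u : ℝ =>
        (-((w3 * (ℓ1 + u * (ℓ2 - ℓ1)) + ℓ3 * u * (1 - u)) / (u * w3 * (1 - u))))
          * (u * (1 - u) * (ℓ3 * (α - u) + (ℓ2 - ℓ1) * w3)
              / (w3 * (ℓ1 + u * (ℓ2 - ℓ1)) + ℓ3 * u * (1 - u))))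
      (ℓ3 / w3) w1 ∧
    HasDerivAt (fun v : ℝ =>
        (-((v * (ℓ1 + w1 * (ℓ2 - ℓ1)) + ℓ3 * w1 * (1 - w1)) / (w1 * v * (1 - w1))))
          * (v * (ℓ2 * (1 - α) * w1 + ℓ1 * α * (1 - w1) - ℓ3 * w1 * (1 - w1)
                  - v * (ℓ1 + w1 * (ℓ2 - ℓ1)))
              / (v * (ℓ1 + w1 * (ℓ2 - ℓ1)) + ℓ3 * w1 * (1 - w1))))
      ((ℓ2 - ℓ1) / (1 - w1) + ℓ1 / (w1 * (1 - w1))) w3 ∧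
    ℓ3 / w3 + ((ℓ2 - ℓ1) / (1 - w1) + ℓ1 / (w1 * (1 - w1)))
      = -(-((w3 * (ℓ1 + w1 * (ℓ2 - ℓ1)) + ℓ3 * w1 * (1 - w1)) / (w1 * w3 * (1 - w1)))) ∧
    0 < -(-((w3 * (ℓ1 + w1 * (ℓ2 - ℓ1)) + ℓ3 * w1 * (1 - w1)) / (w1 * w3 * (1 - w1)))) :=
  ⟨hasDerivAt_dulac_mul_drift₁ h1 h2 h3 hw1 hw3.1,
    hasDerivAt_dulac_mul_drift₃ h1 h2 h3 hw1 hw3.1,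
    slope_sum_eq_neg_dulac hw1.1.ne' (sub_pos.2 hw1.2).ne' hw3.1.ne',
    neg_dulac_pos h1 h2 h3 hw1 hw3.1⟩
end

section
/- Fix α ∈ (0,1) and positive reals ℓ1, ℓ2, ℓ3 with ℓ3 < ℓ1 + ℓ2. Then there exist δ > 0 and κ > 0 such that for all reals w1 ∈ [0,1] and w3 ∈ (0,κ] satisfying α − δ ≤ w1 ≤ α + δ + w3, one has w3·(α·ℓ1·(1−w1) + (1−α)·ℓ2·w1)/(ℓ3·w1·(1−w1) + ℓ2·w1·w3 + ℓ1·(1−w1)·w3) > w3. -/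
/-!
At `(w1, w3) = (α, 0)` the denominator is `ℓ3 α (1 - α) > 0` and the numerator exceeds it by
`α (1 - α) (ℓ1 + ℓ2 - ℓ3) > 0`. By continuity both inequalities persist on an `ε`-neighbourhood
of `(α, 0)`, and `δ = κ = ε / 3` confines `(w1, w3)` to it.
-/

open Filter Topology

section TriangleDenominator

variable {α ℓ1 ℓ2 ℓ3 : ℝ}

lemma eventually_triangle_denominator_pos (hα : α ∈ Set.Ioo (0:ℝ) 1) (h3 : 0 < ℓ3) :
    ∀ᶠ p : ℝ × ℝ in 𝓝 (α, 0),
      0 < ℓ3 * p.1 * (1 - p.1) + ℓ2 * p.1 * p.2 + ℓ1 * (1 - p.1) * p.2 := by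
  have hcont : Continuous fun p : ℝ × ℝ =>
      ℓ3 * p.1 * (1 - p.1) + ℓ2 * p.1 * p.2 + ℓ1 * (1 - p.1) * p.2 := by fun_prop
  have hpos : 0 < ℓ3 * α * (1 - α) := mul_pos (mul_pos h3 hα.1) (sub_pos.2 hα.2)
  exact continuousAt_const.eventually_lt hcont.continuousAt (by simpa using hpos)

lemma eventually_triangle_denominator_lt_numerator (hα : α ∈ Set.Ioo (0:ℝ) 1)
    (h312 : ℓ3 < ℓ1 + ℓ2) :
    ∀ᶠ p : ℝ × ℝ in 𝓝 (α, 0),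
      ℓ3 * p.1 * (1 - p.1) + ℓ2 * p.1 * p.2 + ℓ1 * (1 - p.1) * p.2
        < α * ℓ1 * (1 - p.1) + (1 - α) * ℓ2 * p.1 := by
  have hcont : Continuous fun p : ℝ × ℝ =>
      α * ℓ1 * (1 - p.1) + (1 - α) * ℓ2 * p.1
        - (ℓ3 * p.1 * (1 - p.1) + ℓ2 * p.1 * p.2 + ℓ1 * (1 - p.1) * p.2) := by fun_prop
  have hpos : 0 < α * (1 - α) * (ℓ1 + ℓ2 - ℓ3) :=
    mul_pos (mul_pos hα.1 (sub_pos.2 hα.2)) (sub_pos.2 h312)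
  have hval : α * ℓ1 * (1 - α) + (1 - α) * ℓ2 * α - (ℓ3 * α * (1 - α) + ℓ2 * α * 0
      + ℓ1 * (1 - α) * 0) = α * (1 - α) * (ℓ1 + ℓ2 - ℓ3) := by ring
  filter_upwards [continuousAt_const.eventually_lt hcont.continuousAt (hval ▸ hpos)]
    with p hp
  exact sub_pos.1 hp

end TriangleDenominator

theorem statement16_general (α ℓ1 ℓ2 ℓ3 : ℝ) (hα : α ∈ Set.Ioo (0:ℝ) 1)
    (h3 : 0 < ℓ3) (h312 : ℓ3 < ℓ1 + ℓ2) :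
    ∃ δ > (0:ℝ), ∃ κ > (0:ℝ), ∀ w1 ∈ Set.Icc (0:ℝ) 1, ∀ w3 ∈ Set.Ioc (0:ℝ) κ,
      α - δ ≤ w1 → w1 ≤ α + δ + w3 →
      w3 < w3 * (α * ℓ1 * (1 - w1) + (1 - α) * ℓ2 * w1)
          / (ℓ3 * w1 * (1 - w1) + ℓ2 * w1 * w3 + ℓ1 * (1 - w1) * w3) := by
  obtain ⟨ε, hε, hball⟩ := Metric.eventually_nhds_iff.1
    ((eventually_triangle_denominator_pos (ℓ1 := ℓ1) (ℓ2 := ℓ2) hα h3).and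
      (eventually_triangle_denominator_lt_numerator hα h312))
  refine ⟨ε / 3, by positivity, ε / 3, by positivity, fun w1 _ w3 hw3 hlo hhi => ?_⟩
  have hdist : dist (w1, w3) (α, 0) < ε := by
    rw [Prod.dist_eq, Real.dist_eq, Real.dist_eq, sub_zero]
    exact max_lt (abs_lt.2 ⟨by linarith, by linarith [hw3.2]⟩)
      (abs_lt.2 ⟨by linarith [hw3.1], by linarith [hw3.2]⟩)
  obtain ⟨hden, hlt⟩ := hball hdist
  rw [lt_div_iff₀ hden]
  exact mul_lt_mul_of_pos_left hlt hw3.1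

/-- Strict domination of the identity by `p3(w1, 1-w1, w3)` near `(w1, w3) = (α, 0)` when
`ℓ3 < ℓ1 + ℓ2`: the key step showing that the normalized reinforcement count of branch 3
of the `(ℓ1,ℓ2,ℓ3)`-triangle has strictly positive liminf. -/
theorem statement16 (α ℓ1 ℓ2 ℓ3 : ℝ) (hα : α ∈ Set.Ioo (0:ℝ) 1)
    (h1 : 0 < ℓ1) (h2 : 0 < ℓ2) (h3 : 0 < ℓ3) (h312 : ℓ3 < ℓ1 + ℓ2) :
    ∃ δ > (0:ℝ), ∃ κ > (0:ℝ), ∀ w1 ∈ Set.Icc (0:ℝ) 1, ∀ w3 ∈ Set.Ioc (0:ℝ) κ,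
      α - δ ≤ w1 → w1 ≤ α + δ + w3 →
      w3 < w3 * (α * ℓ1 * (1 - w1) + (1 - α) * ℓ2 * w1)
          / (ℓ3 * w1 * (1 - w1) + ℓ2 * w1 * w3 + ℓ1 * (1 - w1) * w3) :=
  statement16_general α ℓ1 ℓ2 ℓ3 hα h3 h312
end

section
/- Fix α ∈ (0,1) and positive reals ℓ1, ℓ2, ℓ3 with ℓ2 < ℓ1 + ℓ3. Then there exists δ > 0 such that for all reals w2 ∈ (0,δ) and w3 ∈ (1−α−δ, 1−α+δ) ∩ [0,1], one has 1 − (α·ℓ3·(1−w2)·w2 + ℓ2·(1−w2)·w3)/(ℓ3·(1−w2)·w2 + ℓ2·(1−w2)·w3 + ℓ1·w2·w3) > w2. -/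
/-!
Clearing denominators, the inequality reads `N < (1 - w2) D`, and the gap is
`(1 - w2) D - N = w2 (1 - w2) g(w2, w3)` with `g(w2, w3) = ℓ3 (1 - α - w2) + (ℓ1 - ℓ2) w3`.
Since `g(0, 1 - α) = (1 - α)(ℓ1 + ℓ3 - ℓ2) > 0`, continuity keeps `g` positive on a small box
around `(0, 1 - α)`, and there the gap is positive.
-/

open Filter Topology

theorem one_sub_mul_denom_sub_numer (α ℓ1 ℓ2 ℓ3 w2 w3 : ℝ) :
    (1 - w2) * (ℓ3 * (1 - w2) * w2 + ℓ2 * (1 - w2) * w3 + ℓ1 * w2 * w3)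
        - (α * ℓ3 * (1 - w2) * w2 + ℓ2 * (1 - w2) * w3)
      = w2 * (1 - w2) * (ℓ3 * (1 - α - w2) + (ℓ1 - ℓ2) * w3) := by
  ring

theorem lt_one_sub_div_of_lt_one_sub_mul {w N D : ℝ} (hN : 0 ≤ N) (hw : w < 1)
    (h : N < (1 - w) * D) : w < 1 - N / D := by
  have hD : 0 < D := pos_of_mul_pos_right (hN.trans_lt h) (sub_pos.2 hw).le
  rw [lt_sub_comm, div_lt_iff₀ hD]
  exact h

theorem statement17_general (α ℓ1 ℓ2 ℓ3 : ℝ) (hα : α ∈ Set.Ioo (0:ℝ) 1)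
    (h2 : 0 < ℓ2) (h3 : 0 < ℓ3) (h213 : ℓ2 < ℓ1 + ℓ3) :
    ∃ δ > (0:ℝ), ∀ w2 ∈ Set.Ioo (0:ℝ) δ,
      ∀ w3 ∈ Set.Ioo (1 - α - δ) (1 - α + δ) ∩ Set.Icc (0:ℝ) 1,
      w2 < 1 - (α * ℓ3 * (1 - w2) * w2 + ℓ2 * (1 - w2) * w3)
          / (ℓ3 * (1 - w2) * w2 + ℓ2 * (1 - w2) * w3 + ℓ1 * w2 * w3) := by
  obtain ⟨hα0, hα1⟩ := hα
  let g : ℝ × ℝ → ℝ := fun p => ℓ3 * (1 - α - p.1) + (ℓ1 - ℓ2) * p.2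
  have hg_center : 0 < g (0, 1 - α) := by
    have : g (0, 1 - α) = (1 - α) * (ℓ1 + ℓ3 - ℓ2) := by simp only [g]; ring
    rw [this]
    exact mul_pos (by linarith) (by linarith)
  have hg_cont : Continuous g := by fun_prop
  have hnear : ∀ᶠ p in 𝓝 ((0:ℝ), 1 - α), 0 < g p ∧ p.1 < 1 :=
    (hg_cont.tendsto _ |>.eventually_const_lt hg_center).and
      (continuous_fst.tendsto _ |>.eventually_lt_const one_pos)
  obtain ⟨δ, hδ, hball⟩ := Metric.eventually_nhds_iff.mp hnear
  refine ⟨δ, hδ, fun w2 ⟨hw2, hw2δ⟩ w3 ⟨⟨hw3l, hw3r⟩, hw3, _⟩ => ?_⟩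
  have hdist : dist (w2, w3) ((0:ℝ), 1 - α) < δ := by
    rw [Prod.dist_eq, max_lt_iff, Real.dist_eq, Real.dist_eq, abs_sub_lt_iff, abs_sub_lt_iff]
    refine ⟨⟨?_, ?_⟩, ?_, ?_⟩ <;> linarith
  obtain ⟨hg, hw21⟩ := hball hdist
  have h1w2 : 0 < 1 - w2 := sub_pos.2 hw21
  refine lt_one_sub_div_of_lt_one_sub_mul ?_ hw21 ?_
  · positivity
  · rw [← sub_pos, one_sub_mul_denom_sub_numer]
    exact mul_pos (mul_pos hw2 h1w2) hg

/-- Strict domination of the identity by `p2(1-w2, w2, w3)` near `(w2, w3) = (0, 1-α)`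
when `ℓ2 < ℓ1 + ℓ3`: the key step showing that the normalized reinforcement count of
branch 1 of the `(ℓ1,ℓ2,ℓ3)`-triangle has limsup strictly less than 1. -/
theorem statement17 (α ℓ1 ℓ2 ℓ3 : ℝ) (hα : α ∈ Set.Ioo (0:ℝ) 1)
    (h1 : 0 < ℓ1) (h2 : 0 < ℓ2) (h3 : 0 < ℓ3) (h213 : ℓ2 < ℓ1 + ℓ3) :
    ∃ δ > (0:ℝ), ∀ w2 ∈ Set.Ioo (0:ℝ) δ,
      ∀ w3 ∈ Set.Ioo (1 - α - δ) (1 - α + δ) ∩ Set.Icc (0:ℝ) 1,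
      w2 < 1 - (α * ℓ3 * (1 - w2) * w2 + ℓ2 * (1 - w2) * w3)
          / (ℓ3 * (1 - w2) * w2 + ℓ2 * (1 - w2) * w3 + ℓ1 * w2 * w3) :=
  statement17_general α ℓ1 ℓ2 ℓ3 hα h2 h3 h213
end
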